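/- arXiv:1106.4693 — 11 statements merged into one kernel-verified Lean document; each statement's English description precedes it below -/
import Mathlib

section
/- For 0 ≤ k ≤ t, the necklace binomial coefficient N(t,k) defined by N(t,k) = (1/2)·C(t,k) when t is even and k is odd, and N(t,k) = (1/2)·(C(t,k) + C(⌊t/2⌋, ⌊k/2⌋)) otherwise, satisfies the Pascal-type recurrence N(t,k) = N(t-2, k-2) + C(t-2, k-1) + N(t-2, k) for t ≥ 2 and 2 ≤ k ≤ t-2. -/
def neckN (t k : Nat) : Nat :=
  if t % 2 = 0 ∧ k % 2 = 1 then Nat.choose t k / 2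
  else (Nat.choose t k + Nat.choose (t / 2) (k / 2)) / 2

lemma choose_parity (t k : ℕ) :
    Nat.choose t k % 2 = (Nat.choose (t % 2) (k % 2) * Nat.choose (t / 2) (k / 2)) % 2 :=
  Choose.choose_modEq_choose_mod_mul_choose_div_nat (p := 2)

lemma dvd_choose_of (t k : ℕ) (ht : t % 2 = 0) (hk : k % 2 = 1) : 2 ∣ Nat.choose t k := by
  have h := choose_parity t k
  rw [ht, hk] at h
  simp [Nat.choose] at h
  omega

lemma dvd_sum_of (t k : ℕ) (h : ¬(t % 2 = 0 ∧ k % 2 = 1)) :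
    2 ∣ Nat.choose t k + Nat.choose (t / 2) (k / 2) := by
  have hp := choose_parity t k
  have ht := Nat.mod_two_eq_zero_or_one t
  have hk := Nat.mod_two_eq_zero_or_one k
  have h1 : Nat.choose (t % 2) (k % 2) = 1 := by
    rcases ht with ht | ht <;> rcases hk with hk | hk <;> simp [ht, hk] at h ⊢
  rw [h1, one_mul] at hp
  omega

lemma twice_neckN (t k : ℕ) :
    2 * neckN t k = if t % 2 = 0 ∧ k % 2 = 1 then Nat.choose t k
      else Nat.choose t k + Nat.choose (t / 2) (k / 2) := by
  unfold neckN
  split_ifs with h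
  · exact Nat.mul_div_cancel' (dvd_choose_of t k h.1 h.2)
  · exact Nat.mul_div_cancel' (dvd_sum_of t k h)

lemma pascal2 (n k : ℕ) :
    Nat.choose (n + 2) (k + 2)
      = Nat.choose n k + 2 * Nat.choose n (k + 1) + Nat.choose n (k + 2) := by
  rw [Nat.choose_succ_succ (n + 1) (k + 1), Nat.choose_succ_succ n k,
    Nat.choose_succ_succ n (k + 1)]
  ring

theorem neckN_pascal (t k : ℕ) (h2 : 2 ≤ t) (hk2 : 2 ≤ k) (hkt : k ≤ t - 2) :
    neckN t k = neckN (t - 2) (k - 2) + Nat.choose (t - 2) (k - 1) + neckN (t - 2) k := by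
  obtain ⟨a, rfl⟩ : ∃ a, t = a + 2 := ⟨t - 2, by omega⟩
  obtain ⟨b, rfl⟩ : ∃ b, k = b + 2 := ⟨k - 2, by omega⟩
  simp only [Nat.add_sub_cancel, show b + 2 - 1 = b + 1 by omega]
  apply Nat.eq_of_mul_eq_mul_left (show 0 < 2 by norm_num)
  rw [Nat.mul_add, Nat.mul_add, twice_neckN, twice_neckN, twice_neckN]
  have hm2 : (a + 2) % 2 = a % 2 := by omega
  have hk2' : (b + 2) % 2 = b % 2 := by omega
  have hd2 : (a + 2) / 2 = a / 2 + 1 := by omega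
  have hkd2 : (b + 2) / 2 = b / 2 + 1 := by omega
  by_cases h : a % 2 = 0 ∧ b % 2 = 1
  · rw [if_pos (by omega : (a+2) % 2 = 0 ∧ (b+2) % 2 = 1), if_pos h,
      if_pos (by omega : a % 2 = 0 ∧ (b+2) % 2 = 1), pascal2]
  · rw [if_neg (by omega : ¬((a+2) % 2 = 0 ∧ (b+2) % 2 = 1)), if_neg h,
      if_neg (by omega : ¬(a % 2 = 0 ∧ (b+2) % 2 = 1)), pascal2,
      hd2, hkd2, Nat.choose_succ_succ (a/2) (b/2)]
    simp only [Nat.succ_eq_add_one]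
    ring
end

section
/- For 0 ≤ k ≤ t, the quantity C(t,k) + C(⌊t/2⌋, ⌊k/2⌋) is even when it is not the case that t is even and k is odd; and C(t,k) is even when t is even and k is odd. Hence the necklace binomial coefficients are integers. -/
theorem neckN_integrality (t k : ℕ) (hk : k ≤ t) :
    (¬ (t % 2 = 0 ∧ k % 2 = 1) →
      Even (Nat.choose t k + Nat.choose (t / 2) (k / 2))) ∧
    ((t % 2 = 0 ∧ k % 2 = 1) → Even (Nat.choose t k)) := by
  have h : Nat.choose t k ≡ Nat.choose (t % 2) (k % 2) * Nat.choose (t / 2) (k / 2) [MOD 2] :=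
    @Choose.choose_modEq_choose_mod_mul_choose_div_nat t k 2 ⟨Nat.prime_two⟩
  unfold Nat.ModEq at h
  constructor
  · intro hne
    have h1 : Nat.choose (t % 2) (k % 2) = 1 := by
      rcases Nat.mod_two_eq_zero_or_one t with ht | ht <;>
        rcases Nat.mod_two_eq_zero_or_one k with hk2 | hk2 <;>
        simp [ht, hk2] at hne ⊢
    rw [h1, one_mul] at h
    rw [Nat.even_add, Nat.even_iff, Nat.even_iff]
    omega
  · rintro ⟨ht, hk2⟩
    rw [ht, hk2] at h
    simp at h
    rw [Nat.even_iff]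
    omega
end

section
/- The row sums of the necklace binomial coefficients satisfy ∑_{k=0}^{t} N(t,k) = 2^{t-1} + 2^{⌊(t-1)/2⌋} for all t ≥ 1. -/
open Finset in
lemma neck_choose_mod2 (t k : ℕ) :
    Nat.choose t k % 2 = Nat.choose (t % 2) (k % 2) * Nat.choose (t / 2) (k / 2) % 2 := by
  have := @Choose.choose_modEq_choose_mod_mul_choose_div_nat t k 2 ⟨Nat.prime_two⟩
  exact this

lemma neck_even_odd (t k : ℕ) (ht : t % 2 = 0) (hk : k % 2 = 1) :
    Nat.choose t k % 2 = 0 := by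
  rw [neck_choose_mod2, ht, hk]
  simp

lemma neck_same_parity (t k : ℕ) (h : ¬(t % 2 = 0 ∧ k % 2 = 1)) :
    Nat.choose t k % 2 = Nat.choose (t / 2) (k / 2) % 2 := by
  rw [neck_choose_mod2]
  have ht := Nat.mod_two_eq_zero_or_one t
  have hk := Nat.mod_two_eq_zero_or_one k
  rcases ht with ht | ht <;> rcases hk with hk | hk <;>
    simp [ht, hk] at h ⊢

lemma two_neckN (t k : ℕ) :
    2 * neckN t k = Nat.choose t k +
      (if t % 2 = 0 ∧ k % 2 = 1 then 0 else Nat.choose (t / 2) (k / 2)) := by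
  unfold neckN
  split_ifs with h
  · rw [Nat.mul_div_cancel' (Nat.dvd_of_mod_eq_zero (neck_even_odd t k h.1 h.2))]
    omega
  · have := neck_same_parity t k h
    have : (Nat.choose t k + Nat.choose (t / 2) (k / 2)) % 2 = 0 := by omega
    rw [Nat.mul_div_cancel' (Nat.dvd_of_mod_eq_zero this)]

lemma sum_double (f : ℕ → ℕ) (m : ℕ) :
    ∑ k ∈ Finset.range (2 * m), f (k / 2) = 2 * ∑ j ∈ Finset.range m, f j := by
  induction m with
  | zero => simp
  | succ m ih =>
      rw [Nat.mul_succ, Finset.sum_range_succ, Finset.sum_range_succ, Finset.sum_range_succ, ih]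
      have h1 : (2 * m) / 2 = m := by omega
      have h2 : (2 * m + 1) / 2 = m := by omega
      rw [h1, h2]; ring

lemma sum_even_only (f : ℕ → ℕ) (m : ℕ) :
    ∑ k ∈ Finset.range (2 * m + 1), (if k % 2 = 1 then 0 else f (k / 2)) =
      ∑ j ∈ Finset.range (m + 1), f j := by
  induction m with
  | zero => simp
  | succ m ih =>
      have h : 2 * (m + 1) + 1 = (2 * m + 1) + 1 + 1 := by ring
      rw [h, Finset.sum_range_succ, Finset.sum_range_succ, ih, Finset.sum_range_succ]
      have h1 : (2 * m + 1) % 2 = 1 := by omega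
      have h2 : (2 * m + 1 + 1) % 2 = 0 := by omega
      have h3 : (2 * m + 1 + 1) / 2 = m + 1 := by omega
      simp [h1, h2, h3, Finset.sum_range_succ]

theorem neckN_row_sum (t : ℕ) (ht : 1 ≤ t) :
    ∑ k ∈ Finset.range (t + 1), neckN t k = 2 ^ (t - 1) + 2 ^ ((t - 1) / 2) := by
  have key : 2 * ∑ k ∈ Finset.range (t + 1), neckN t k
      = 2 * (2 ^ (t - 1) + 2 ^ ((t - 1) / 2)) := by
    rw [Finset.mul_sum]
    simp only [two_neckN]
    rw [Finset.sum_add_distrib, Nat.sum_range_choose]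
    rcases Nat.even_or_odd t with ⟨m, hm⟩ | ⟨m, hm⟩
    · -- t = 2m, m ≥ 1
      have hm1 : 1 ≤ m := by omega
      have ht2 : t % 2 = 0 := by omega
      have htd : t / 2 = m := by omega
      have : ∑ k ∈ Finset.range (t + 1),
          (if t % 2 = 0 ∧ k % 2 = 1 then 0 else Nat.choose (t / 2) (k / 2))
          = ∑ j ∈ Finset.range (m + 1), Nat.choose m j := by
        have hrw : t + 1 = 2 * m + 1 := by omega
        rw [hrw, htd, ← sum_even_only (fun j => Nat.choose m j) m]
        apply Finset.sum_congr rfl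
        intro k _
        simp [ht2]
      rw [this, Nat.sum_range_choose]
      have e1 : t - 1 = 2 * m - 1 := by omega
      have e2 : (t - 1) / 2 = m - 1 := by omega
      rw [e2, e1, Nat.mul_add, ← pow_succ', ← pow_succ',
        show m - 1 + 1 = m by omega, show 2 * m - 1 + 1 = t by omega]
    · -- t = 2m+1
      have ht2 : ¬ t % 2 = 0 := by omega
      have htd : t / 2 = m := by omega
      have : ∑ k ∈ Finset.range (t + 1),
          (if t % 2 = 0 ∧ k % 2 = 1 then 0 else Nat.choose (t / 2) (k / 2))
          = 2 * ∑ j ∈ Finset.range (m + 1), Nat.choose m j := by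
        have hrw : t + 1 = 2 * (m + 1) := by omega
        rw [hrw, htd, ← sum_double (fun j => Nat.choose m j) (m + 1)]
        apply Finset.sum_congr rfl
        intro k _
        simp [ht2]
      rw [this, Nat.sum_range_choose]
      have e1 : t - 1 = 2 * m := by omega
      have e2 : (t - 1) / 2 = m := by omega
      rw [e2, e1, Nat.mul_add, ← pow_succ', ← pow_succ', show 2 * m + 1 = t by omega]
  omega
end

section
/- The row generating function of the necklace binomial coefficients satisfies ∑_{k=0}^{t} N(t,k)·y^k = (1/2)·(1+y)^t + (1/2)·(1+y^2)^{⌊t/2⌋}·(1+y)^{t mod 2} as polynomials in y (over ℚ or ℝ). -/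
/-- auxiliary numerator term -/
def neckAux (t k : Nat) : Nat :=
  if t % 2 = 0 ∧ k % 2 = 1 then 0 else Nat.choose (t / 2) (k / 2)

lemma neckN_cast (t k : ℕ) :
    (neckN t k : ℚ) = ((Nat.choose t k : ℚ) + (neckAux t k : ℚ)) / 2 := by
  have lucas : Nat.choose t k ≡ Nat.choose (t % 2) (k % 2) * Nat.choose (t / 2) (k / 2) [MOD 2] :=
    Choose.choose_modEq_choose_mod_mul_choose_div_nat (p := 2)
  unfold neckN neckAux
  split_ifs with h
  · -- t even, k odd: choose t k is even
    rw [h.1, h.2] at lucas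
    simp [Nat.ModEq] at lucas
    have h2 : 2 ∣ Nat.choose t k := Nat.dvd_of_mod_eq_zero lucas
    rw [Nat.cast_div h2 (by norm_num)]
    push_cast
    ring
  · -- choose (t%2) (k%2) = 1
    have ht : t % 2 = 0 ∨ t % 2 = 1 := Nat.mod_two_eq_zero_or_one t
    have hk : k % 2 = 0 ∨ k % 2 = 1 := Nat.mod_two_eq_zero_or_one k
    have hone : Nat.choose (t % 2) (k % 2) = 1 := by
      rcases ht with ht | ht <;> rcases hk with hk | hk <;>
        simp [ht, hk] at h ⊢
    rw [hone, one_mul] at lucas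
    have h2 : 2 ∣ Nat.choose t k + Nat.choose (t / 2) (k / 2) := by
      have := lucas.add_right (Nat.choose (t / 2) (k / 2))
      have h3 : (Nat.choose (t / 2) (k / 2) + Nat.choose (t / 2) (k / 2)) % 2 = 0 := by omega
      unfold Nat.ModEq at this
      omega
    rw [Nat.cast_div h2 (by norm_num)]
    push_cast
    ring

lemma sum_pair (m : ℕ) (f : ℕ → ℚ) :
    ∑ k ∈ Finset.range (2 * m), f k = ∑ j ∈ Finset.range m, (f (2 * j) + f (2 * j + 1)) := by
  induction m with
  | zero => simp
  | succ n ih =>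
      have : 2 * (n + 1) = (2 * n + 1) + 1 := by ring
      rw [this, Finset.sum_range_succ, Finset.sum_range_succ, ih, Finset.sum_range_succ]
      ring

lemma binom_sum (t : ℕ) (y : ℚ) :
    ∑ k ∈ Finset.range (t + 1), (Nat.choose t k : ℚ) * y ^ k = (1 + y) ^ t := by
  have h := add_pow y 1 t
  simp only [one_pow, mul_one] at h
  rw [add_comm 1 y, h]
  exact Finset.sum_congr rfl fun k _ => by ring

lemma aux_sum (t : ℕ) (y : ℚ) :
    ∑ k ∈ Finset.range (t + 1), (neckAux t k : ℚ) * y ^ k =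
      (1 + y ^ 2) ^ (t / 2) * (1 + y) ^ (t % 2) := by
  rcases Nat.even_or_odd t with ⟨m, hm⟩ | ⟨m, hm⟩
  · -- t = 2m
    subst hm
    have ht2 : m + m = 2 * m := by ring
    have hdiv : (m + m) / 2 = m := by omega
    have hmod : (m + m) % 2 = 0 := by omega
    rw [hdiv, hmod, pow_zero, mul_one, Finset.sum_range_succ, ht2, sum_pair]
    have key : ∀ j ∈ Finset.range m,
        (neckAux (2 * m) (2 * j) : ℚ) * y ^ (2 * j) +
          (neckAux (2 * m) (2 * j + 1) : ℚ) * y ^ (2 * j + 1) =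
        (Nat.choose m j : ℚ) * (y ^ 2) ^ j := by
      intro j _
      have h1 : neckAux (2 * m) (2 * j) = Nat.choose m j := by
        unfold neckAux
        rw [if_neg (by omega)]
        congr 1 <;> omega
      have h2 : neckAux (2 * m) (2 * j + 1) = 0 := by
        unfold neckAux
        rw [if_pos ⟨by omega, by omega⟩]
      rw [h1, h2]
      push_cast
      rw [← pow_mul]
      ring
    rw [Finset.sum_congr rfl key]
    have h3 : neckAux (2 * m) (2 * m) = Nat.choose m m := by
      unfold neckAux
      rw [if_neg (by omega)]
      congr 1 <;> omega
    rw [h3, Nat.choose_self]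
    have : ((1 : ℚ) + y ^ 2) ^ m =
        ∑ j ∈ Finset.range (m + 1), (Nat.choose m j : ℚ) * (y ^ 2) ^ j := (binom_sum m (y ^ 2)).symm
    rw [this, Finset.sum_range_succ, Nat.choose_self]
    push_cast
    rw [← pow_mul]
  · -- t = 2m+1
    subst hm
    have hdiv : (2 * m + 1) / 2 = m := by omega
    have hmod : (2 * m + 1) % 2 = 1 := by omega
    rw [hdiv, hmod, pow_one]
    have ht2 : 2 * m + 1 + 1 = 2 * (m + 1) := by ring
    rw [ht2, sum_pair]
    have key : ∀ j ∈ Finset.range (m + 1),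
        (neckAux (2 * m + 1) (2 * j) : ℚ) * y ^ (2 * j) +
          (neckAux (2 * m + 1) (2 * j + 1) : ℚ) * y ^ (2 * j + 1) =
        (Nat.choose m j : ℚ) * (y ^ 2) ^ j * (1 + y) := by
      intro j _
      have h1 : neckAux (2 * m + 1) (2 * j) = Nat.choose m j := by
        unfold neckAux
        rw [if_neg (by omega)]
        congr 1 <;> omega
      have h2 : neckAux (2 * m + 1) (2 * j + 1) = Nat.choose m j := by
        unfold neckAux
        rw [if_neg (by omega)]
        congr 1 <;> omega
      rw [h1, h2]
      rw [← pow_mul]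
      ring
    rw [Finset.sum_congr rfl key, ← Finset.sum_mul, ← binom_sum m (y ^ 2)]

theorem neckN_gen_fun (t : ℕ) (y : ℚ) :
    ∑ k ∈ Finset.range (t + 1), (neckN t k : ℚ) * y ^ k =
      (1 / 2) * (1 + y) ^ t + (1 / 2) * (1 + y ^ 2) ^ (t / 2) * (1 + y) ^ (t % 2) := by
  have : ∀ k ∈ Finset.range (t + 1), (neckN t k : ℚ) * y ^ k =
      (1 / 2) * ((Nat.choose t k : ℚ) * y ^ k) + (1 / 2) * ((neckAux t k : ℚ) * y ^ k) := by
    intro k _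
    rw [neckN_cast]
    ring
  rw [Finset.sum_congr rfl this, Finset.sum_add_distrib, ← Finset.mul_sum, ← Finset.mul_sum,
    binom_sum, aux_sum, mul_assoc]
end

section
/- The necklace binomial coefficients are unimodal in k: for 0 ≤ k < ⌊t/2⌋, N(t,k) ≤ N(t,k+1). -/
namespace Nat

theorem choose_le_choose_of_le_half_left {n a b : ℕ} (hab : a ≤ b) (hb : b ≤ n / 2) :
    n.choose a ≤ n.choose b := by
  induction b, hab using Nat.le_induction with
  | base => exact le_rfl
  | succ b _ ih => exact (ih (by omega)).trans (choose_le_succ_of_lt_half_left (by omega))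

theorem le_choose_of_pos_of_le_half {n m : ℕ} (hm : 0 < m) (h : m ≤ n / 2) : n ≤ n.choose m := by
  simpa using choose_le_choose_of_le_half_left hm h

theorem choose_mul_choose_le_choose_two_mul (s m : ℕ) :
    s.choose m * s.choose m ≤ (2 * s).choose (2 * m) := by
  rw [two_mul s, add_choose_eq]
  exact Finset.single_le_sum (f := fun ij : ℕ × ℕ => s.choose ij.1 * s.choose ij.2) (a := (m, m))
    (fun _ _ => Nat.zero_le _) (by simp [two_mul])

theorem choose_two_mul_add_choose_le_choose_two_mul_succ {s m : ℕ} (h : 2 * m < s) :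
    (2 * s).choose (2 * m) + s.choose m ≤ (2 * s).choose (2 * m + 1) := by
  obtain ⟨d, rfl⟩ : ∃ d, s = 2 * m + 1 + d := ⟨s - (2 * m + 1), by omega⟩
  have hsq := choose_mul_choose_le_choose_two_mul (2 * m + 1 + d) m
  have hsmall : 2 * m + 1 ≤ (2 * m + 1 + d).choose m * (2 * d + 1) := by
    rcases m.eq_zero_or_pos with rfl | hm
    · simp
    · calc 2 * m + 1 ≤ 2 * m + 1 + d := Nat.le_add_right _ _
        _ ≤ (2 * m + 1 + d).choose m := le_choose_of_pos_of_le_half hm (by omega)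
        _ ≤ _ := Nat.le_mul_of_pos_right _ (by omega)
  have hratio := choose_succ_right_eq (2 * (2 * m + 1 + d)) (2 * m)
  rw [show 2 * (2 * m + 1 + d) - 2 * m = 2 * m + 1 + (2 * d + 1) by omega] at hratio
  refine Nat.le_of_mul_le_mul_right ?_ (succ_pos (2 * m))
  nlinarith

end Nat

theorem neckN_two_mul_two_mul (s m : ℕ) :
    neckN (2 * s) (2 * m) = ((2 * s).choose (2 * m) + s.choose m) / 2 := by
  simp [neckN]

theorem neckN_two_mul_two_mul_add_one (s m : ℕ) :
    neckN (2 * s) (2 * m + 1) = (2 * s).choose (2 * m + 1) / 2 := by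
  simp [neckN]

theorem neckN_two_mul_add_one (s k : ℕ) :
    neckN (2 * s + 1) k = ((2 * s + 1).choose k + s.choose (k / 2)) / 2 := by
  simp [neckN, show (2 * s + 1) / 2 = s by omega]

theorem neckN_unimodal (t k : ℕ) (hk : k < t / 2) : neckN t k ≤ neckN t (k + 1) := by
  have hchoose := Nat.choose_le_succ_of_lt_half_left hk
  obtain ⟨s, rfl | rfl⟩ := Nat.even_or_odd' t
  · obtain ⟨m, rfl | rfl⟩ := Nat.even_or_odd' k
    · rw [neckN_two_mul_two_mul, neckN_two_mul_two_mul_add_one]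
      exact Nat.div_le_div_right
        (Nat.choose_two_mul_add_choose_le_choose_two_mul_succ (by omega))
    · rw [neckN_two_mul_two_mul_add_one, show 2 * m + 1 + 1 = 2 * (m + 1) by ring,
        neckN_two_mul_two_mul]
      exact Nat.div_le_div_right (le_add_right hchoose)
  · rw [neckN_two_mul_add_one, neckN_two_mul_add_one]
    refine Nat.div_le_div_right (add_le_add hchoose ?_)
    exact Nat.choose_le_choose_of_le_half_left (by omega) (by omega)
end

section
/- If y = a + ib is a complex root of the necklace polynomial N_t (for some t ≥ 1), then the real and imaginary parts satisfy b^2·(1+a) = -a·(a^2 + a + 1); in particular, every root y satisfies -1 ≤ Re(y) ≤ 0. -/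
noncomputable def neckC (t : ℕ) (y : ℂ) : ℂ :=
  (1 / 2) * (1 + y) ^ t + (1 / 2) * (1 + y ^ 2) ^ (t / 2) * (1 + y) ^ (t % 2)

/-!
Away from `y = -1`, cancelling `(1 + y) ^ (t % 2)` turns `N_t(y) = 0` into
`((1 + y) ^ 2) ^ ⌊t/2⌋ = -(1 + y ^ 2) ^ ⌊t/2⌋`, which forces `⌊t/2⌋ ≠ 0` and hence
`|1 + y| ^ 2 = |1 + y ^ 2|`. Squaring and expanding in `a = Re y`, `b = Im y` gives
`4 (b ^ 2 (1 + a) + a (a ^ 2 + a + 1)) = 0`; since `a ^ 2 + a + 1 > 0`, the two sides of the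
resulting curve equation have incompatible signs unless `-1 ≤ a ≤ 0`.
-/

theorem sq_one_add_pow_eq_neg_of_neckC_eq_zero {t : ℕ} {y : ℂ} (hy : neckC t y = 0)
    (hy₁ : 1 + y ≠ 0) : ((1 + y) ^ 2) ^ (t / 2) = -(1 + y ^ 2) ^ (t / 2) := by
  refine mul_right_cancel₀ (pow_ne_zero (t % 2) hy₁) ?_
  rw [← pow_mul, ← pow_add, Nat.div_add_mod]
  unfold neckC at hy
  linear_combination 2 * hy

theorem norm_one_add_sq_eq_of_neckC_eq_zero {t : ℕ} {y : ℂ} (hy : neckC t y = 0)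
    (hy₁ : 1 + y ≠ 0) : ‖1 + y‖ ^ 2 = ‖1 + y ^ 2‖ := by
  have h := sq_one_add_pow_eq_neg_of_neckC_eq_zero hy hy₁
  have ht : t / 2 ≠ 0 := by
    rintro h0
    rw [h0, pow_zero, pow_zero] at h
    norm_num at h
  have hnorm := congrArg norm h
  rw [norm_neg, norm_pow, norm_pow, norm_pow] at hnorm
  exact (pow_left_inj₀ (by positivity) (norm_nonneg _) ht).mp hnorm

theorem Complex.im_sq_mul_one_add_re_of_sq_norm_one_add_eq {y : ℂ}
    (h : ‖1 + y‖ ^ 2 = ‖1 + y ^ 2‖) :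
    y.im ^ 2 * (1 + y.re) = -(y.re * (y.re ^ 2 + y.re + 1)) := by
  have hsq : normSq (1 + y) ^ 2 = normSq (1 + y ^ 2) := by
    rw [← Complex.sq_norm, ← Complex.sq_norm, h]
  simp only [normSq_apply, add_re, add_im, one_re, one_im, pow_two, mul_re, mul_im] at hsq
  linear_combination hsq / 4

theorem neg_one_le_and_nonpos_of_sq_mul_one_add_eq {a b : ℝ}
    (h : b ^ 2 * (1 + a) = -(a * (a ^ 2 + a + 1))) : -1 ≤ a ∧ a ≤ 0 := by
  have hq : 0 < a ^ 2 + a + 1 := by nlinarith [sq_nonneg (2 * a + 1)]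
  constructor
  · by_contra! ha
    nlinarith [mul_nonpos_of_nonneg_of_nonpos (sq_nonneg b) (by linarith : 1 + a ≤ 0)]
  · by_contra! ha
    nlinarith [sq_nonneg b, mul_pos ha hq]

theorem neckC_root_curve_general (t : ℕ) (y : ℂ) (hy : neckC t y = 0) :
    (y.re ≠ -1 →
      y.im ^ 2 * (1 + y.re) = -(y.re * (y.re ^ 2 + y.re + 1))) ∧
    -1 ≤ y.re ∧ y.re ≤ 0 := by
  by_cases hy₁ : 1 + y = 0
  · have hre : y.re = -1 := by simp [eq_neg_of_add_eq_zero_right hy₁]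
    exact ⟨fun h => absurd hre h, by rw [hre], by rw [hre]; norm_num⟩
  have hcurve := Complex.im_sq_mul_one_add_re_of_sq_norm_one_add_eq
    (norm_one_add_sq_eq_of_neckC_eq_zero hy hy₁)
  exact ⟨fun _ => hcurve, neg_one_le_and_nonpos_of_sq_mul_one_add_eq hcurve⟩

theorem neckC_root_curve (t : ℕ) (ht : 1 ≤ t) (y : ℂ) (hy : neckC t y = 0) :
    (y.re ≠ -1 →
      y.im ^ 2 * (1 + y.re) = -(y.re * (y.re ^ 2 + y.re + 1))) ∧
    -1 ≤ y.re ∧ y.re ≤ 0 :=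
  neckC_root_curve_general t y hy
end

section
/- If y = a+ib with a ≠ -1, b real, is a root of N_t, and we set u = 1/(1+a) and v = b/(1+a), then (u,v) lies on the elliptic curve v^2 = u^3 - 2u^2 + 2u - 1 = (u-1)(u^2 - u + 1). -/
/-!
Writing `t = 2k + r` with `r ∈ {0, 1}`, a root `y ≠ -1` of `N_t` satisfies
`(1 + y)^(2k + r) = -(1 + y²)^k (1 + y)^r`. Taking absolute values and cancelling gives
`|1 + y|² = |1 + y²|` (for `t ≥ 2`; `N_0 = 1` and `N_1 = 1 + y` have no such roots).
Squared, this is `|1 + y|⁴ - |1 + y²|² = 4 (b²(1 + a) + a(1 + a + a²)) = 0`, and dividing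
by `(1 + a)³` is exactly the curve equation in `u = 1/(1 + a)`, `v = b/(1 + a)`.
-/

open Complex

theorem sq_eq_of_pow_eq_pow_div_two_mul_pow_mod_two {R : Type*} [Field R] [LinearOrder R]
    [IsStrictOrderedRing R] {p q : R} {t : ℕ} (hp : 0 < p) (hq : 0 ≤ q) (ht : 2 ≤ t)
    (h : p ^ t = q ^ (t / 2) * p ^ (t % 2)) : p ^ 2 = q := by
  have hsplit : p ^ t = (p ^ 2) ^ (t / 2) * p ^ (t % 2) := by
    rw [← pow_mul, ← pow_add, Nat.div_add_mod]
  have hpow : (p ^ 2) ^ (t / 2) = q ^ (t / 2) :=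
    mul_right_cancel₀ (pow_ne_zero _ hp.ne') (hsplit.symm.trans h)
  exact (pow_left_inj₀ (by positivity) hq (by omega)).mp hpow

theorem neckC_zero (y : ℂ) : neckC 0 y = 1 := by
  norm_num [neckC]

theorem neckC_one (y : ℂ) : neckC 1 y = 1 + y := by
  simp only [neckC]
  ring

theorem normSq_one_add_sq_eq_of_neckC_eq_zero {t : ℕ} {y : ℂ} (hy : 1 + y ≠ 0)
    (h : neckC t y = 0) : normSq (1 + y) ^ 2 = normSq (1 + y ^ 2) := by
  obtain ht | ht : t < 2 ∨ 2 ≤ t := lt_or_ge t 2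
  · interval_cases t
    · simp [neckC_zero] at h
    · exact absurd ((neckC_one y).symm.trans h) hy
  have hpow : (1 + y) ^ t = -((1 + y ^ 2) ^ (t / 2) * (1 + y) ^ (t % 2)) := by
    unfold neckC at h
    linear_combination 2 * h
  have hnormSq := congrArg normSq hpow
  simp only [map_pow, map_mul, normSq_neg] at hnormSq
  exact sq_eq_of_pow_eq_pow_div_two_mul_pow_mod_two (normSq_pos.mpr hy) (normSq_nonneg _) ht
    hnormSq

theorem normSq_one_add_sq_sub_normSq_one_add_sq (a b : ℝ) :
    normSq (1 + ⟨a, b⟩) ^ 2 - normSq (1 + ⟨a, b⟩ ^ 2) =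
      4 * (b ^ 2 * (1 + a) + a * (1 + a + a ^ 2)) := by
  simp only [normSq_apply, add_re, add_im, one_re, one_im, pow_two, mul_re, mul_im]
  ring

theorem neckC_root_elliptic (t : ℕ) (a b : ℝ) (ha : a ≠ -1)
    (hy : neckC t (Complex.mk a b) = 0) :
    (b / (1 + a)) ^ 2 =
      (1 / (1 + a)) ^ 3 - 2 * (1 / (1 + a)) ^ 2 + 2 * (1 / (1 + a)) - 1 := by
  have ha' : 1 + a ≠ 0 := fun h => ha (by linarith)
  have hy1 : 1 + Complex.mk a b ≠ 0 := fun h => ha' (by simpa using congrArg re h)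
  have hcurve : b ^ 2 * (1 + a) + a * (1 + a + a ^ 2) = 0 := by
    have := normSq_one_add_sq_sub_normSq_one_add_sq a b
    rw [normSq_one_add_sq_eq_of_neckC_eq_zero hy1 hy, sub_self] at this
    linarith
  field_simp
  linear_combination hcurve
end

section
/- For every positive integer m and real x with 1+4x ≥ 0, the identity (1/m)·[((1-√(1+4x))/2)^m + ((1+√(1+4x))/2)^m] = ∑_{k=0}^{⌊m/2⌋} (1/(m-k))·C(m-k,k)·x^k holds. -/
open Finset

noncomputable def Gp (x : ℝ) (n : ℕ) : ℝ :=
  ∑ k ∈ Finset.range (n + 1), (Nat.choose (n - k) k : ℝ) * x ^ k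

lemma Gp_zero (x : ℝ) : Gp x 0 = 1 := by simp [Gp]

lemma Gp_one (x : ℝ) : Gp x 1 = 1 := by
  simp [Gp, Finset.sum_range_succ]

lemma pascal' (n k : ℕ) (hk : 1 ≤ k) :
    Nat.choose (n + 2 - k) k = Nat.choose (n + 1 - k) k + Nat.choose (n + 1 - k) (k - 1) := by
  obtain ⟨k, rfl⟩ : ∃ j, k = j + 1 := ⟨k - 1, by omega⟩
  by_cases h : k + 1 ≤ n + 1
  · have h1 : n + 2 - (k + 1) = (n + 1 - (k + 1)) + 1 := by omega
    rw [h1, Nat.add_sub_cancel, Nat.choose_succ_succ, Nat.succ_eq_add_one]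
    exact Nat.add_comm _ _
  · have h1 : n + 2 - (k + 1) = 0 := by omega
    have h2 : n + 1 - (k + 1) = 0 := by omega
    rw [h1, h2, Nat.add_sub_cancel]
    simp [Nat.choose_eq_zero_of_lt (show (0:ℕ) < k + 1 by omega),
      Nat.choose_eq_zero_of_lt (show (0:ℕ) < k by omega)]

lemma Gp_rec (x : ℝ) (n : ℕ) : Gp x (n + 2) = Gp x (n + 1) + x * Gp x n := by
  have L : Gp x (n + 2) = (∑ i ∈ Finset.range (n + 2),
      (Nat.choose (n + 2 - (i + 1)) (i + 1) : ℝ) * x ^ (i + 1))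
      + (Nat.choose (n + 2 - 0) 0 : ℝ) * x ^ 0 := by
    rw [Gp, Finset.sum_range_succ' _ (n + 2)]
  have R1 : Gp x (n + 1) = (∑ i ∈ Finset.range (n + 1),
      (Nat.choose (n + 1 - (i + 1)) (i + 1) : ℝ) * x ^ (i + 1))
      + (Nat.choose (n + 1 - 0) 0 : ℝ) * x ^ 0 := by
    rw [Gp, Finset.sum_range_succ' _ (n + 1)]
  rw [L, R1]
  have step : ∀ i ∈ Finset.range (n + 2),
      (Nat.choose (n + 2 - (i + 1)) (i + 1) : ℝ) * x ^ (i + 1)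
        = (Nat.choose (n - i) (i + 1) : ℝ) * x ^ (i + 1)
          + (Nat.choose (n - i) i : ℝ) * x ^ (i + 1) := by
    intro i _
    have hp := pascal' n (i + 1) (by omega)
    have e : n + 1 - (i + 1) = n - i := by omega
    rw [hp, e]
    push_cast
    ring
  rw [Finset.sum_congr rfl step, Finset.sum_add_distrib]
  have e1 : ∑ i ∈ Finset.range (n + 2), (Nat.choose (n - i) (i + 1) : ℝ) * x ^ (i + 1)
      = ∑ i ∈ Finset.range (n + 1), (Nat.choose (n + 1 - (i + 1)) (i + 1) : ℝ) * x ^ (i + 1) := by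
    rw [Finset.sum_range_succ, show n - (n + 1) = 0 by omega,
      Nat.choose_eq_zero_of_lt (by omega)]
    simp only [Nat.cast_zero, zero_mul, add_zero]
    exact Finset.sum_congr rfl fun i _ => by rw [show n + 1 - (i + 1) = n - i by omega]
  have e2 : ∑ i ∈ Finset.range (n + 2), (Nat.choose (n - i) i : ℝ) * x ^ (i + 1)
      = x * Gp x n := by
    rw [Finset.sum_range_succ, show n - (n + 1) = 0 by omega,
      Nat.choose_eq_zero_of_lt (by omega), Gp, Finset.mul_sum]
    simp only [Nat.cast_zero, zero_mul, add_zero]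
    exact Finset.sum_congr rfl fun i _ => by ring
  rw [e1, e2]
  simp
  ring

lemma key_nat (n k : ℕ) (hn : 1 ≤ n) (hk : 1 ≤ k) :
    (n + k) * Nat.choose n k = n * (Nat.choose (n - 1) k + 2 * Nat.choose (n - 1) (k - 1)) := by
  obtain ⟨n, rfl⟩ : ∃ j, n = j + 1 := ⟨n - 1, by omega⟩
  obtain ⟨k, rfl⟩ : ∃ j, k = j + 1 := ⟨k - 1, by omega⟩
  simp only [Nat.add_sub_cancel]
  have h1 : Nat.choose (n + 1) (k + 1) = Nat.choose n k + Nat.choose n (k + 1) :=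
    Nat.choose_succ_succ n k
  have h2 : (n + 1) * Nat.choose n k = Nat.choose (n + 1) (k + 1) * (k + 1) :=
    Nat.add_one_mul_choose_eq n k
  calc (n + 1 + (k + 1)) * Nat.choose (n + 1) (k + 1)
      = (n + 1) * Nat.choose (n + 1) (k + 1) + Nat.choose (n + 1) (k + 1) * (k + 1) := by ring
    _ = (n + 1) * (Nat.choose n k + Nat.choose n (k + 1)) + (n + 1) * Nat.choose n k := by
        rw [← h2, h1]
    _ = (n + 1) * (Nat.choose n (k + 1) + 2 * Nat.choose n k) := by ring

lemma key_real (x : ℝ) (m k : ℕ) (hk1 : 1 ≤ k) (hk : k < m) :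
    (m : ℝ) * (1 / ((m : ℝ) - k) * (Nat.choose (m - k) k : ℝ) * x ^ k)
      = ((Nat.choose (m - 1 - k) k : ℝ) + 2 * (Nat.choose (m - 1 - k) (k - 1) : ℝ)) * x ^ k := by
  have h := key_nat (m - k) k (by omega) hk1
  rw [show m - k + k = m by omega, show m - k - 1 = m - 1 - k by omega] at h
  have h' : (m : ℝ) * (Nat.choose (m - k) k : ℝ)
      = ((m : ℝ) - k) * ((Nat.choose (m - 1 - k) k : ℝ)
          + 2 * (Nat.choose (m - 1 - k) (k - 1) : ℝ)) := by
    have := congrArg (Nat.cast (R := ℝ)) h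
    push_cast [Nat.cast_sub hk.le] at this
    linarith
  have hne : (m : ℝ) - k ≠ 0 := by
    have : (k : ℝ) < m := by exact_mod_cast hk
    linarith
  field_simp
  linear_combination x ^ k * h'

lemma ab_pow (x : ℝ) (hx : 0 ≤ 1 + 4 * x) (n : ℕ) :
    ((1 - Real.sqrt (1 + 4 * x)) / 2) ^ (n + 2) + ((1 + Real.sqrt (1 + 4 * x)) / 2) ^ (n + 2)
      = Gp x (n + 1) + 2 * x * Gp x n := by
  set s := Real.sqrt (1 + 4 * x) with hs_def
  have hs : s ^ 2 = 1 + 4 * x := Real.sq_sqrt hx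
  set a := (1 - s) / 2 with ha_def
  set b := (1 + s) / 2 with hb_def
  have hab : a + b = 1 := by rw [ha_def, hb_def]; ring
  have ha : a ^ 2 = a + x := by rw [ha_def]; nlinarith [hs]
  have hb : b ^ 2 = b + x := by rw [hb_def]; nlinarith [hs]
  induction n using Nat.twoStepInduction with
  | zero =>
    have : a ^ 2 + b ^ 2 = 1 + 2 * x := by nlinarith [hs]
    rw [this, Gp_one, Gp_zero]; ring
  | one =>
    have : a ^ 3 + b ^ 3 = 1 + 3 * x := by nlinarith [hs]
    rw [this, Gp_rec x 0, Gp_one, Gp_zero]; ring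
  | more n ih1 ih2 =>
    have e1 : a ^ (n + 2 + 2) = a ^ (n + 2) * a + a ^ (n + 2) * x := by
      rw [show n + 2 + 2 = (n + 2) + 2 by ring, pow_add, ha]; ring
    have e2 : b ^ (n + 2 + 2) = b ^ (n + 2) * b + b ^ (n + 2) * x := by
      rw [show n + 2 + 2 = (n + 2) + 2 by ring, pow_add, hb]; ring
    have e3 : a ^ (n + 2) * a + b ^ (n + 2) * b = a ^ (n + 1 + 2) + b ^ (n + 1 + 2) := by
      ring
    rw [e1, e2, show a ^ (n + 2) * a + a ^ (n + 2) * x + (b ^ (n + 2) * b + b ^ (n + 2) * x)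
      = (a ^ (n + 2) * a + b ^ (n + 2) * b) + x * (a ^ (n + 2) + b ^ (n + 2)) by ring,
      e3, ih1, ih2, Gp_rec x (n + 1), Gp_rec x n]
    ring

theorem fib_poly_identity (m : ℕ) (hm : 1 ≤ m) (x : ℝ) (hx : 0 ≤ 1 + 4 * x) :
    (1 / (m : ℝ)) *
        (((1 - Real.sqrt (1 + 4 * x)) / 2) ^ m + ((1 + Real.sqrt (1 + 4 * x)) / 2) ^ m) =
      ∑ k ∈ Finset.range (m / 2 + 1),
        (1 / ((m : ℝ) - k)) * (Nat.choose (m - k) k : ℝ) * x ^ k := by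
  rcases Nat.lt_or_ge m 2 with hm2 | hm2
  · have : m = 1 := by omega
    subst this
    simp [Finset.sum_range_one]
    ring
  · obtain ⟨n, rfl⟩ : ∃ n, m = n + 2 := ⟨m - 2, by omega⟩
    have hm0 : ((n + 2 : ℕ) : ℝ) ≠ 0 := by positivity
    have hext : ∑ k ∈ Finset.range ((n + 2) / 2 + 1),
          (1 / (((n + 2 : ℕ) : ℝ) - k)) * (Nat.choose (n + 2 - k) k : ℝ) * x ^ k
        = ∑ k ∈ Finset.range (n + 2),
          (1 / (((n + 2 : ℕ) : ℝ) - k)) * (Nat.choose (n + 2 - k) k : ℝ) * x ^ k := by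
      apply Finset.sum_subset
      · intro k hk
        simp only [Finset.mem_range] at hk ⊢
        omega
      · intro k hk hk2
        simp only [Finset.mem_range] at hk hk2
        rw [Nat.choose_eq_zero_of_lt (show n + 2 - k < k by omega)]
        simp
    have hsum : ((n + 2 : ℕ) : ℝ) * ∑ k ∈ Finset.range (n + 2),
          (1 / (((n + 2 : ℕ) : ℝ) - k)) * (Nat.choose (n + 2 - k) k : ℝ) * x ^ k
        = Gp x (n + 1) + 2 * x * Gp x n := by
      rw [Finset.mul_sum, Finset.sum_range_succ' _ (n + 1)]
      have h0 : ((n + 2 : ℕ) : ℝ) * ((1 / (((n + 2 : ℕ) : ℝ) - (0 : ℕ))) *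
          (Nat.choose (n + 2 - 0) 0 : ℝ) * x ^ (0 : ℕ)) = 1 := by
        simp
        field_simp
      have hterm : ∀ i ∈ Finset.range (n + 1),
          ((n + 2 : ℕ) : ℝ) * ((1 / (((n + 2 : ℕ) : ℝ) - ((i + 1 : ℕ) : ℝ))) *
            (Nat.choose (n + 2 - (i + 1)) (i + 1) : ℝ) * x ^ (i + 1))
          = ((Nat.choose (n - i) (i + 1) : ℝ) + 2 * (Nat.choose (n - i) i : ℝ)) * x ^ (i + 1) := by
        intro i hi
        simp only [Finset.mem_range] at hi
        have h := key_real x (n + 2) (i + 1) (by omega) (by omega)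
        rw [show n + 2 - 1 - (i + 1) = n - i by omega] at h
        simpa using h
      rw [Finset.sum_congr rfl hterm, h0]
      have hG1 : Gp x (n + 1)
          = (∑ i ∈ Finset.range (n + 1), (Nat.choose (n - i) (i + 1) : ℝ) * x ^ (i + 1)) + 1 := by
        rw [Gp, Finset.sum_range_succ' _ (n + 1)]
        simp only [Nat.sub_zero, Nat.choose_zero_right, Nat.cast_one, pow_zero, mul_one, one_mul]
        congr 1
        exact Finset.sum_congr rfl fun i _ => by rw [show n + 1 - (i + 1) = n - i by omega]
      have hG2 : 2 * x * Gp x n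
          = ∑ i ∈ Finset.range (n + 1), 2 * (Nat.choose (n - i) i : ℝ) * x ^ (i + 1) := by
        rw [Gp, Finset.mul_sum]
        exact Finset.sum_congr rfl fun i _ => by ring
      rw [hG1, hG2]
      have expand : ∀ i ∈ Finset.range (n + 1),
          ((Nat.choose (n - i) (i + 1) : ℝ) + 2 * (Nat.choose (n - i) i : ℝ)) * x ^ (i + 1)
          = (Nat.choose (n - i) (i + 1) : ℝ) * x ^ (i + 1)
            + 2 * (Nat.choose (n - i) i : ℝ) * x ^ (i + 1) := by
        intro i _
        ring
      rw [Finset.sum_congr rfl expand, Finset.sum_add_distrib]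
      ring
    rw [hext, ab_pow x hx n, ← hsum]
    field_simp
end

section
/- For every positive integer n, ∑_{k=0}^{⌊n/2⌋} (1/(n-k))·C(n-k,k) = L_n/n, i.e., n·∑_{k=0}^{⌊n/2⌋} (1/(n-k))·C(n-k,k) = L_n, where L_n is the n-th Lucas number. -/
def lucas : ℕ → ℕ
  | 0 => 2
  | 1 => 1
  | n + 2 => lucas (n + 1) + lucas n

lemma sumB (m : ℕ) : ∑ k ∈ Finset.range (m + 1), Nat.choose (m - k) k = Nat.fib (m + 1) := by
  rw [Nat.fib_succ_eq_sum_choose, Finset.Nat.sum_antidiagonal_eq_sum_range_succ_mk,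
    ← Finset.sum_range_reflect]
  refine Finset.sum_congr rfl fun k hk => ?_
  simp only [Finset.mem_range] at hk
  congr 1 <;> omega

lemma sumA (m : ℕ) : ∑ k ∈ Finset.range (m / 2 + 1), Nat.choose (m - k) k = Nat.fib (m + 1) := by
  rw [← sumB m]
  refine Finset.sum_subset (Finset.range_subset_range.2 (by omega)) fun k hk hk' => ?_
  simp only [Finset.mem_range] at hk hk'
  exact Nat.choose_eq_zero_of_lt (by omega)

lemma lucas_eq : ∀ n : ℕ, lucas (n + 1) = Nat.fib (n + 2) + Nat.fib n
  | 0 => rfl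
  | 1 => rfl
  | n + 2 => by
    rw [show lucas (n + 3) = lucas (n + 2) + lucas (n + 1) from rfl,
      lucas_eq (n + 1), lucas_eq n, Nat.fib_add_two (n := n + 2), Nat.fib_add_two (n := n)]
    ring

theorem lucas_binom_sum (n : ℕ) (hn : 1 ≤ n) :
    (n : ℚ) * ∑ k ∈ Finset.range (n / 2 + 1),
        (1 / ((n : ℚ) - k)) * (Nat.choose (n - k) k : ℚ) = (lucas n : ℚ) := by
  rw [Finset.mul_sum]
  have key : ∀ k ∈ Finset.range (n / 2 + 1),
      (n : ℚ) * (1 / ((n : ℚ) - k) * (Nat.choose (n - k) k : ℚ)) =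
      (Nat.choose (n - k) k : ℚ) +
        (if k = 0 then 0 else (Nat.choose (n - 1 - k) (k - 1) : ℚ)) := by
    intro k hk
    simp only [Finset.mem_range] at hk
    have hkn : k ≤ n / 2 := by omega
    have hd : 1 ≤ n - k := by omega
    have hcast : ((n : ℚ) - k) = ((n - k : ℕ) : ℚ) := by
      push_cast [Nat.cast_sub (by omega : k ≤ n)]; ring
    rcases Nat.eq_zero_or_pos k with rfl | hkpos
    · simp only [hcast, Nat.sub_zero, Nat.choose_zero_right, Nat.cast_one, mul_one, one_div, reduceIte, add_zero]
      have hne : (n : ℚ) ≠ 0 := Nat.cast_ne_zero.2 (by omega)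
      exact mul_inv_cancel₀ hne
    · simp only [if_neg (by omega : ¬ k = 0)]
      obtain ⟨d, hdd⟩ : ∃ d, n - k = d + 1 := ⟨n - k - 1, by omega⟩
      obtain ⟨j, hjj⟩ : ∃ j, k = j + 1 := ⟨k - 1, by omega⟩
      have hnat : (d + 1) * Nat.choose d j = Nat.choose (d + 1) (j + 1) * (j + 1) :=
        Nat.add_one_mul_choose_eq d j
      have hn_eq : (n : ℚ) = ((n - k : ℕ) : ℚ) + (k : ℚ) := by
        rw [← Nat.cast_add]; congr 1; omega
      rw [hcast, hn_eq, hdd, hjj]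
      have h1 : n - 1 - (j + 1) = d := by omega
      rw [h1, Nat.add_sub_cancel]
      have hq : ((d : ℚ) + 1) * Nat.choose d j = Nat.choose (d + 1) (j + 1) * ((j : ℚ) + 1) := by
        exact_mod_cast hnat
      have hd1 : ((d : ℚ) + 1) ≠ 0 := by positivity
      push_cast
      field_simp
      linear_combination -hq
  rw [Finset.sum_congr rfl key, Finset.sum_add_distrib, ← Nat.cast_sum, sumA n]
  have h2 : ∑ k ∈ Finset.range (n / 2 + 1),
      (if k = 0 then 0 else (Nat.choose (n - 1 - k) (k - 1) : ℚ)) = Nat.fib (n - 1) := by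
    rw [Finset.sum_range_succ']
    simp only [Nat.succ_ne_zero, if_false, reduceIte, add_zero, Nat.succ_sub_one, if_neg (Nat.succ_ne_zero _)]
    rcases Nat.lt_or_ge n 2 with h | h
    · interval_cases n <;> simp
    · have hrange : n / 2 = (n - 2) / 2 + 1 := by omega
      have : ∀ i, n - 1 - (i + 1) = n - 2 - i := fun i => by omega
      rw [hrange]
      rw [Finset.sum_congr rfl fun i _ => by rw [this i]]
      rw_mod_cast [sumA (n - 2)]
      congr 2
      omega
  rw [h2]
  obtain ⟨p, rfl⟩ : ∃ p, n = p + 1 := ⟨n - 1, by omega⟩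
  rw [lucas_eq p, Nat.add_sub_cancel]
  push_cast
  ring
end

section
/- For all n ≥ 1, ∑_{k=0}^{⌊n/2⌋} (1/(n-k))·∑_{d | gcd(n,k)} φ(d)·C((n-k)/d, k/d) = (1/n)·∑_{d|n} φ(d)·L_{n/d}, where φ is Euler's totient, C the binomial coefficient, and L the Lucas numbers (with the k=0 term interpreted as 1). -/
/-!
Grouping the inner sums by the divisor `d` and writing `k = d * j`, the contribution of `d` is
`φ(d)/d · ∑_{j ≤ m/2} C(m-j, j)/(m-j)` with `m = n/d`, so it suffices to show that this last sum is
`L_m / m`. Since `(m-j) C(m-j-1, j) = (m-2j) C(m-j, j)`, one has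
`m/(m-j) · C(m-j, j) = 2 C(m-j, j) - C(m-j-1, j)`, and the diagonal sums of Pascal's triangle turn
the right-hand side into `2 F_{m+1} - F_m = L_m`.
-/

open Finset

theorem lucas_add_fib (m : ℕ) : lucas m + Nat.fib m = 2 * Nat.fib (m + 1) := by
  induction m using Nat.twoStepInduction with
  | zero => rfl
  | one => rfl
  | more k ih₁ ih₂ =>
    simp only [lucas, Nat.fib_add_two] at *
    omega

theorem sum_range_choose_sub_of_half_lt {n N : ℕ} (h : n / 2 < N) :
    ∑ i ∈ range N, (n - i).choose i = ∑ i ∈ range (n / 2 + 1), (n - i).choose i :=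
  (sum_subset (range_subset_range.2 h) fun i _ hi =>
    Nat.choose_eq_zero_of_lt (by rw [mem_range] at hi; omega)).symm

theorem sum_range_choose_sub_eq_fib (n : ℕ) :
    ∑ i ∈ range (n / 2 + 1), (n - i).choose i = Nat.fib (n + 1) := by
  rw [← sum_range_choose_sub_of_half_lt (by omega : n / 2 < n + 1), Nat.fib_succ_eq_sum_choose,
    ← Nat.sum_antidiagonal_swap, Nat.sum_antidiagonal_eq_sum_range_succ_mk]
  rfl

theorem add_div_mul_choose {a : ℕ} (j : ℕ) (ha : 0 < a) (hj : j ≤ a) :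
    ((a : ℚ) + j) / a * a.choose j = 2 * a.choose j - (a - 1).choose j := by
  obtain ⟨b, rfl⟩ := Nat.exists_eq_add_of_lt ha
  have key := Nat.choose_mul_succ_eq b j
  simp only [zero_add, add_tsub_cancel_right] at *
  rw [← Nat.cast_inj (R := ℚ)] at key
  push_cast [Nat.cast_sub hj] at key ⊢
  field_simp
  linear_combination key

theorem sum_range_choose_sub_div_eq_lucas_div {m : ℕ} (hm : 0 < m) :
    ∑ j ∈ range (m / 2 + 1), 1 / ((m : ℚ) - j) * (m - j).choose j = 1 / m * lucas m := by
  have hterm : ∀ j ∈ range (m / 2 + 1), 1 / ((m : ℚ) - j) * (m - j).choose j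
      = 1 / m * (2 * (m - j).choose j - (m - 1 - j).choose j) := by
    intro j hj
    rw [mem_range] at hj
    rw [Nat.sub_right_comm, ← add_div_mul_choose j (by omega) (by omega)]
    push_cast [Nat.cast_sub (by omega : j ≤ m)]
    have : (m : ℚ) - j ≠ 0 := sub_ne_zero.2 (by norm_cast; omega)
    field_simp
    ring
  have hfib : ∑ j ∈ range (m / 2 + 1), (m - 1 - j).choose j = Nat.fib m := by
    rw [sum_range_choose_sub_of_half_lt (by omega), sum_range_choose_sub_eq_fib,
      Nat.sub_add_cancel hm]
  have hlucas : (lucas m : ℚ) = 2 * Nat.fib (m + 1) - Nat.fib m := by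
    rw [eq_sub_iff_add_eq]
    exact_mod_cast lucas_add_fib m
  rw [sum_congr rfl hterm, ← mul_sum, sum_sub_distrib, ← mul_sum, hlucas,
    ← sum_range_choose_sub_eq_fib, ← hfib]
  push_cast
  rfl

theorem sum_range_filter_dvd {M : Type*} [AddCommMonoid M] {d : ℕ} (hd : 0 < d) (N : ℕ)
    (f : ℕ → M) : ∑ k ∈ range (N + 1) with d ∣ k, f k = ∑ j ∈ range (N / d + 1), f (d * j) := by
  have : {k ∈ range (N + 1) | d ∣ k} = (range (N / d + 1)).image (d * ·) := by
    ext k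
    simp only [mem_filter, mem_range, mem_image, Nat.lt_succ_iff, Nat.le_div_iff_mul_le hd]
    constructor
    · rintro ⟨hk, j, rfl⟩
      exact ⟨j, by linarith, rfl⟩
    · rintro ⟨j, hj, rfl⟩
      exact ⟨by linarith, dvd_mul_right d j⟩
  rw [this, sum_image fun _ _ _ _ h => Nat.eq_of_mul_eq_mul_left hd h]

theorem sum_range_filter_dvd_choose_div {n d : ℕ} (hn : 0 < n) (hd : d ∣ n) :
    ∑ k ∈ range (n / 2 + 1) with d ∣ k, 1 / ((n : ℚ) - k) * ((n - k) / d).choose (k / d)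
      = 1 / n * lucas (n / d) := by
  obtain ⟨m, rfl⟩ := hd
  have hd : 0 < d := Nat.pos_of_mul_pos_right hn
  have hm : 0 < m := Nat.pos_of_mul_pos_left hn
  have hterm : ∀ j ∈ range (m / 2 + 1),
      1 / ((d * m : ℕ) - (d * j : ℕ) : ℚ) * ((d * m - d * j) / d).choose (d * j / d)
        = 1 / d * (1 / ((m : ℚ) - j) * (m - j).choose j) := by
    intro j _
    rw [← Nat.mul_sub, Nat.mul_div_cancel_left _ hd, Nat.mul_div_cancel_left _ hd]
    push_cast
    rw [← mul_sub, ← one_div_mul_one_div, mul_assoc]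
  rw [sum_range_filter_dvd hd, Nat.div_div_eq_div_mul, mul_comm 2, ← Nat.div_div_eq_div_mul,
    Nat.mul_div_cancel_left _ hd, sum_congr rfl hterm, ← mul_sum,
    sum_range_choose_sub_div_eq_lucas_div hm]
  push_cast
  ring

theorem W_row_sum (n : ℕ) (hn : 1 ≤ n) :
    ∑ k ∈ Finset.range (n / 2 + 1),
        (1 / ((n : ℚ) - k)) *
          ∑ d ∈ (Nat.gcd n k).divisors,
            (Nat.totient d : ℚ) * (Nat.choose ((n - k) / d) (k / d) : ℚ) =
      (1 / (n : ℚ)) * ∑ d ∈ n.divisors, (Nat.totient d : ℚ) * (lucas (n / d) : ℚ) := by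
  have hdiv : ∀ k d, k ∈ range (n / 2 + 1) ∧ d ∈ (n.gcd k).divisors ↔
      k ∈ {k ∈ range (n / 2 + 1) | d ∣ k} ∧ d ∈ n.divisors := by
    intro k d
    simp only [mem_filter, Nat.mem_divisors, Nat.dvd_gcd_iff, ne_eq, Nat.gcd_eq_zero_iff,
      Nat.one_le_iff_ne_zero.1 hn]
    tauto
  calc _ = ∑ d ∈ n.divisors, (Nat.totient d : ℚ) * ∑ k ∈ range (n / 2 + 1) with d ∣ k,
          1 / ((n : ℚ) - k) * ((n - k) / d).choose (k / d) := by
        simp only [mul_sum, mul_left_comm (1 / _ : ℚ)]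
        exact sum_comm' hdiv
    _ = _ := by
        rw [mul_sum]
        refine sum_congr rfl fun d hd => ?_
        rw [sum_range_filter_dvd_choose_div hn (Nat.dvd_of_mem_divisors hd)]
        ring
end

section
/- For m ≥ 1 and |z| < 1 (or as formal power series), ∑_{i ≥ 0} N(i+2m-1, 2m-1)·z^i = (1/2)·(1-z)^{-2m} + (1/2)·(1-z^2)^{-m}, where N denotes the necklace binomial coefficient. -/
/-!
By Lucas' theorem mod 2, `C(t, k) ≡ C(t mod 2, k mod 2) · C(⌊t/2⌋, ⌊k/2⌋)`, so both divisions
in `neckN` are exact and `2 N(i + 2m - 1, 2m - 1) = C(i + 2m - 1, 2m - 1) + [i even] C(i/2 + m - 1, m - 1)`.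
The first term is the coefficient of `(1 - z)^{-2m}`, the second that of `(1 - z²)^{-m}`,
the expansion `z ↦ z²` of `(1 - z)^{-m}`.
-/

open PowerSeries

theorem two_mul_neckN (t k : ℕ) :
    2 * neckN t k =
      t.choose k + if t % 2 = 0 ∧ k % 2 = 1 then 0 else (t / 2).choose (k / 2) := by
  have : Fact (Nat.Prime 2) := ⟨Nat.prime_two⟩
  have lucas : t.choose k % 2 = (t % 2).choose (k % 2) * (t / 2).choose (k / 2) % 2 :=
    Choose.choose_modEq_choose_mod_mul_choose_div_nat
  unfold neckN
  split_ifs with h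
  · rw [h.1, h.2, Nat.choose_zero_succ, zero_mul] at lucas
    omega
  · have hone : (t % 2).choose (k % 2) = 1 := by
      rcases Nat.mod_two_eq_zero_or_one t with ht | ht <;>
        rcases Nat.mod_two_eq_zero_or_one k with hk | hk <;> simp_all
    rw [hone, one_mul] at lucas
    omega

theorem two_mul_neckN_odd_column (d i : ℕ) :
    2 * neckN (i + (2 * d + 1)) (2 * d + 1) =
      (2 * d + 1 + i).choose (2 * d + 1) + if 2 ∣ i then (d + i / 2).choose d else 0 := by
  rw [two_mul_neckN, add_comm i]
  congr 1
  by_cases hi : 2 ∣ i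
  · rw [if_neg (by omega), if_pos hi, show (2 * d + 1 + i) / 2 = d + i / 2 by omega,
      show (2 * d + 1) / 2 = d by omega]
  · rw [if_pos (by omega), if_neg hi]

theorem expand_mk_choose_mul_one_sub_X_sq_pow (R : Type*) [CommRing R] (d : ℕ) :
    expand 2 two_ne_zero (mk fun n => ((d + n).choose d : R)) * (1 - X ^ 2) ^ (d + 1) = 1 := by
  simpa using congrArg (expand 2 two_ne_zero) (mk_add_choose_mul_one_sub_pow_eq_one R (d := d))

theorem two_mul_mk_neckN_odd_column (d : ℕ) :
    2 * (mk fun i => (neckN (i + (2 * d + 1)) (2 * d + 1) : ℚ)) =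
      (mk fun n => ((2 * d + 1 + n).choose (2 * d + 1) : ℚ)) +
        expand 2 two_ne_zero (mk fun n => ((d + n).choose d : ℚ)) := by
  ext i
  rw [map_add, coeff_expand, two_mul, map_add, ← two_mul]
  simp only [coeff_mk]
  exact_mod_cast two_mul_neckN_odd_column d i

theorem neckN_column_gen_fun (m : ℕ) (hm : 1 ≤ m) :
    (PowerSeries.mk fun i => (neckN (i + 2 * m - 1) (2 * m - 1) : ℚ)) *
        (2 * (1 - PowerSeries.X) ^ (2 * m) * (1 - PowerSeries.X ^ 2) ^ m) =
      (1 - PowerSeries.X ^ 2) ^ m + (1 - PowerSeries.X) ^ (2 * m) := by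
  obtain ⟨d, rfl⟩ : ∃ d, m = d + 1 := ⟨m - 1, by omega⟩
  have hcol : (mk fun i => (neckN (i + 2 * (d + 1) - 1) (2 * (d + 1) - 1) : ℚ)) =
      mk fun i => (neckN (i + (2 * d + 1)) (2 * d + 1) : ℚ) := by
    congr! 3
  have hbinom := mk_add_choose_mul_one_sub_pow_eq_one ℚ (d := 2 * d + 1)
  have hexpand := expand_mk_choose_mul_one_sub_X_sq_pow ℚ d
  have hsplit := two_mul_mk_neckN_odd_column d
  rw [show 2 * d + 1 + 1 = 2 * (d + 1) by omega] at hbinom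
  rw [hcol]
  linear_combination ((1 - X) ^ (2 * (d + 1)) * (1 - X ^ 2) ^ (d + 1)) * hsplit +
    (1 - X ^ 2) ^ (d + 1) * hbinom + (1 - X) ^ (2 * (d + 1)) * hexpand
end
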